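/- Fix L > 0 and δ > 0. Let φ : [0,∞) → ℝ be a function with |φ(t)| ≤ 1 for all t ≥ 0 that is twice continuously differentiable on [0,δ]. For λ ∈ [0,L] and a positive integer m, let K_λ be a Poisson random variable with mean λ. Then, uniformly in λ ∈ [0,L] as m → ∞, E[φ(K_λ/m)] − φ(λ/m) = (λ/(2m²))·φ''(0) + o(m^{-2}); precisely, for every ε > 0 there exists M such that m ≥ M implies sup_{λ∈[0,L]} |E[φ(K_λ/m)] − φ(λ/m) − (λ/(2m²))·φ''(0)| ≤ ε·m^{-2}. -/

import Mathlib

/-!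
Let `P` be the second-order Taylor polynomial of `φ` at `0`. Since a Poisson variable `K` with
mean `λ` has `E[K] = λ` and `E[K²] = λ² + λ`, replacing `φ` by `P` changes
`E[φ(K/m)] - φ(λ/m)` by exactly `λ/(2m²) · φ''(0)`. The remainder `R = φ - P` obeys
`|R x| ≤ ε x² + A x⁴` on `[0, ∞)`: Taylor's theorem gives `ε x²` near `0`, and the bound on `φ`
gives quadratic growth, hence `A x⁴`, away from `0`. As the second and fourth Poisson moments are
bounded for `λ ∈ [0, L]`, both `E[R(K/m)]` and `R(λ/m)` are `O(ε m⁻²) + O(m⁻⁴)`.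
-/

open Filter Real

noncomputable def poissonWeight (lam : ℝ) (k : ℕ) : ℝ := exp (-lam) * lam ^ k / k.factorial

lemma poissonWeight_nonneg {lam : ℝ} (hlam : 0 ≤ lam) (k : ℕ) : 0 ≤ poissonWeight lam k := by
  unfold poissonWeight
  positivity

lemma hasSum_poissonWeight (lam : ℝ) : HasSum (poissonWeight lam) 1 := by
  have h := (NormedSpace.expSeries_div_hasSum_exp lam).mul_left (exp (-lam))
  rw [← exp_eq_exp_ℝ, ← exp_add, neg_add_cancel, exp_zero] at h
  exact h.congr_fun fun k => mul_div_assoc _ _ _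

lemma descFactorial_mul_poissonWeight_add (lam : ℝ) (j k : ℕ) :
    ((k + j).descFactorial j : ℝ) * poissonWeight lam (k + j) = lam ^ j * poissonWeight lam k := by
  have hfac : (k.factorial : ℝ) * (k + j).descFactorial j = (k + j).factorial := by
    exact_mod_cast (Nat.add_sub_cancel k j) ▸ Nat.factorial_mul_descFactorial (Nat.le_add_left j k)
  unfold poissonWeight
  rw [← hfac, pow_add]
  have : (k.factorial : ℝ) ≠ 0 := by positivity
  have : ((k + j).descFactorial j : ℝ) ≠ 0 := by
    exact_mod_cast (Nat.descFactorial_pos.2 (Nat.le_add_left j k)).ne'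
  field_simp

lemma hasSum_descFactorial_mul_poissonWeight (lam : ℝ) (j : ℕ) :
    HasSum (fun k : ℕ => (k.descFactorial j : ℝ) * poissonWeight lam k) (lam ^ j) := by
  rw [← hasSum_nat_add_iff' j]
  have hlow : ∑ i ∈ Finset.range j, (i.descFactorial j : ℝ) * poissonWeight lam i = 0 :=
    Finset.sum_eq_zero fun i hi => by
      rw [Nat.descFactorial_eq_zero_iff_lt.2 (Finset.mem_range.1 hi), Nat.cast_zero, zero_mul]
  simpa only [hlow, sub_zero, descFactorial_mul_poissonWeight_add, mul_one] using
    (hasSum_poissonWeight lam).mul_left (lam ^ j)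

lemma hasSum_natCast_mul_poissonWeight (lam : ℝ) :
    HasSum (fun k : ℕ => (k : ℝ) * poissonWeight lam k) lam := by
  simpa using hasSum_descFactorial_mul_poissonWeight lam 1

lemma hasSum_sq_mul_poissonWeight (lam : ℝ) :
    HasSum (fun k : ℕ => (k : ℝ) ^ 2 * poissonWeight lam k) (lam ^ 2 + lam) := by
  convert (hasSum_descFactorial_mul_poissonWeight lam 2).add
    (hasSum_natCast_mul_poissonWeight lam) using 1
  ext k
  rw [Nat.cast_descFactorial_two]
  ring

lemma exp_mul_poissonWeight_two_mul (lam : ℝ) (k : ℕ) :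
    exp lam * poissonWeight (2 * lam) k = 2 ^ k * poissonWeight lam k := by
  unfold poissonWeight
  rw [mul_pow, show -(2 * lam) = -lam + -lam by ring, exp_add]
  field_simp
  rw [← exp_add, add_neg_cancel, exp_zero]
  ring

/-- `k ^ j 2⁻ᵏ` is bounded, and `2ᵏ` tilts `Poi(λ)` into `eˡ Poi(2λ)`. -/
lemma exists_tsum_pow_mul_poissonWeight_le (j : ℕ) :
    ∃ C, 0 ≤ C ∧ ∀ lam, 0 ≤ lam →
      Summable (fun k : ℕ => (k : ℝ) ^ j * poissonWeight lam k) ∧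
        ∑' k : ℕ, (k : ℝ) ^ j * poissonWeight lam k ≤ C * exp lam := by
  obtain ⟨C, hC⟩ := (tendsto_pow_const_mul_const_pow_of_abs_lt_one j
    (by norm_num : |(2⁻¹ : ℝ)| < 1)).bddAbove_range
  have hC0 : 0 ≤ C := le_trans (by simp) (hC ⟨0, rfl⟩)
  refine ⟨C, hC0, fun lam hlam => ?_⟩
  have hle (k : ℕ) :
      (k : ℝ) ^ j * poissonWeight lam k ≤ C * exp lam * poissonWeight (2 * lam) k := by
    calc (k : ℝ) ^ j * poissonWeight lam k
        = ((k : ℝ) ^ j * 2⁻¹ ^ k) * (2 ^ k * poissonWeight lam k) := by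
          rw [mul_assoc, ← mul_assoc (2⁻¹ ^ k), ← mul_pow, inv_mul_cancel₀ two_ne_zero, one_pow,
            one_mul]
      _ ≤ C * (2 ^ k * poissonWeight lam k) :=
          mul_le_mul_of_nonneg_right (hC ⟨k, rfl⟩) (by positivity [poissonWeight_nonneg hlam k])
      _ = C * exp lam * poissonWeight (2 * lam) k := by
          rw [mul_assoc, exp_mul_poissonWeight_two_mul]
  have hdom := (hasSum_poissonWeight (2 * lam)).mul_left (C * exp lam)
  have hsum : Summable (fun k : ℕ => (k : ℝ) ^ j * poissonWeight lam k) :=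
    hdom.summable.of_nonneg_of_le (fun k => by positivity [poissonWeight_nonneg hlam k]) hle
  exact ⟨hsum, by simpa using hsum.tsum_le_tsum hle hdom.summable |>.trans_eq hdom.tsum_eq⟩

lemma hasSum_quadratic_mul_poissonWeight (a b c m lam : ℝ) :
    HasSum (fun k : ℕ => (a + b * (k / m) + c * (k / m) ^ 2 / 2) * poissonWeight lam k)
      (a + b * (lam / m) + c * ((lam / m) ^ 2 + lam / m ^ 2) / 2) := by
  have h := (((hasSum_poissonWeight lam).mul_left a).add
    ((hasSum_natCast_mul_poissonWeight lam).mul_left (b / m))).add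
    ((hasSum_sq_mul_poissonWeight lam).mul_left (c / (2 * m ^ 2)))
  rw [show a + b * (lam / m) + c * ((lam / m) ^ 2 + lam / m ^ 2) / 2
      = a * 1 + b / m * lam + c / (2 * m ^ 2) * (lam ^ 2 + lam) by ring]
  exact h.congr_fun fun k => by ring

lemma tsum_mul_poissonWeight_sub_eq {f : ℝ → ℝ} (a b c m lam : ℝ)
    (hf : Summable fun k : ℕ => f (k / m) * poissonWeight lam k) :
    ∑' k : ℕ, f (k / m) * poissonWeight lam k - f (lam / m) - lam / (2 * m ^ 2) * c =
      ∑' k : ℕ, (f (k / m) - (a + b * (k / m) + c * (k / m) ^ 2 / 2)) * poissonWeight lam k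
        - (f (lam / m) - (a + b * (lam / m) + c * (lam / m) ^ 2 / 2)) := by
  have hq := hasSum_quadratic_mul_poissonWeight a b c m lam
  simp only [sub_mul]
  rw [hf.tsum_sub hq.summable, hq.tsum_eq]
  ring

lemma abs_tsum_mul_poissonWeight_le {R : ℝ → ℝ} {ε A m lam : ℝ} (hm : 0 ≤ m) (hlam : 0 ≤ lam)
    (hR : ∀ x, 0 ≤ x → |R x| ≤ ε * x ^ 2 + A * x ^ 4)
    (h4 : Summable fun k : ℕ => (k : ℝ) ^ 4 * poissonWeight lam k) :
    |∑' k : ℕ, R (k / m) * poissonWeight lam k|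
      ≤ ε * (lam ^ 2 + lam) / m ^ 2
        + A * (∑' k : ℕ, (k : ℝ) ^ 4 * poissonWeight lam k) / m ^ 4 := by
  have hdom := ((hasSum_sq_mul_poissonWeight lam).mul_left (ε / m ^ 2)).add
    (h4.hasSum.mul_left (A / m ^ 4))
  have hk (k : ℕ) : ‖R (k / m) * poissonWeight lam k‖
      ≤ ε / m ^ 2 * ((k : ℝ) ^ 2 * poissonWeight lam k)
        + A / m ^ 4 * ((k : ℝ) ^ 4 * poissonWeight lam k) := by
    rw [Real.norm_eq_abs, abs_mul, abs_of_nonneg (poissonWeight_nonneg hlam k)]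
    calc |R (k / m)| * poissonWeight lam k
        ≤ (ε * (k / m) ^ 2 + A * (k / m) ^ 4) * poissonWeight lam k :=
          mul_le_mul_of_nonneg_right (hR _ (by positivity)) (poissonWeight_nonneg hlam k)
      _ = _ := by ring
  exact (tsum_of_norm_bounded hdom hk).trans_eq (by ring)

lemma abs_sub_taylorWithinEval_le {f : ℝ → ℝ} {s : Set ℝ} {x₀ : ℝ} {n : ℕ} (hs : Convex ℝ s)
    (hx₀ : x₀ ∈ s) (hf : ContDiffOn ℝ n f s) {ε : ℝ} (hε : 0 < ε) :
    ∃ η > 0, ∀ x ∈ s, |x - x₀| < η → |f x - taylorWithinEval f n s x₀ x| ≤ ε * |x - x₀| ^ n := by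
  have h := (taylor_isLittleO hs hx₀ hf).bound hε
  rw [eventually_nhdsWithin_iff, Metric.eventually_nhds_iff] at h
  obtain ⟨η, hη, h⟩ := h
  exact ⟨η, hη, fun x hx hxη => by simpa [Real.dist_eq, norm_pow] using h hxη hx⟩

lemma taylorWithinEval_two (f : ℝ → ℝ) (s : Set ℝ) (x₀ x : ℝ) :
    taylorWithinEval f 2 s x₀ x = f x₀ + derivWithin f s x₀ * (x - x₀)
      + derivWithin (derivWithin f s) s x₀ * (x - x₀) ^ 2 / 2 := by
  simp only [taylorWithinEval_succ, taylor_within_apply, zero_add, Finset.range_one, smul_eq_mul,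
    Finset.sum_singleton, Nat.factorial_zero, Nat.cast_one, inv_one, pow_zero, mul_one,
    iteratedDerivWithin_zero, one_mul, CharP.cast_eq_zero, pow_one, iteratedDerivWithin_succ,
    Nat.factorial_one, Nat.reduceAdd]
  ring

lemma quadratic_le_mul_pow_four {a b c η x : ℝ} (ha : 0 ≤ a) (hb : 0 ≤ b) (hc : 0 ≤ c)
    (hη : 0 < η) (hx : η ≤ x) :
    a + b * x + c * x ^ 2 ≤ (a + b * η + c * η ^ 2) / η ^ 4 * x ^ 4 := by
  obtain ⟨t, ht, rfl⟩ : ∃ t, 1 ≤ t ∧ x = η * t :=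
    ⟨x / η, (one_le_div hη).2 hx, by field_simp⟩
  have ht2 : t ≤ t ^ 2 := by nlinarith
  have ht4 : t ^ 2 ≤ t ^ 4 := by nlinarith
  rw [div_mul_eq_mul_div, le_div_iff₀ (by positivity)]
  nlinarith [mul_le_mul_of_nonneg_left (le_trans ht (ht2.trans ht4)) ha,
    mul_le_mul_of_nonneg_left (ht2.trans ht4) (by positivity : 0 ≤ b * η),
    mul_le_mul_of_nonneg_left ht4 (by positivity : 0 ≤ c * η ^ 2), pow_pos hη 4]

lemma exists_abs_taylor_two_remainder_le {φ : ℝ → ℝ} {δ B : ℝ} (hδ : 0 < δ)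
    (hφ : ContDiffOn ℝ 2 φ (Set.Icc 0 δ)) (hφb : ∀ t, 0 ≤ t → |φ t| ≤ B) {ε : ℝ} (hε : 0 < ε) :
    ∃ A, 0 ≤ A ∧ ∀ x, 0 ≤ x →
      |φ x - (φ 0 + derivWithin φ (Set.Icc 0 δ) 0 * x
        + derivWithin (derivWithin φ (Set.Icc 0 δ)) (Set.Icc 0 δ) 0 * x ^ 2 / 2)|
        ≤ ε * x ^ 2 + A * x ^ 4 := by
  set g := derivWithin φ (Set.Icc 0 δ) 0
  set h := derivWithin (derivWithin φ (Set.Icc 0 δ)) (Set.Icc 0 δ) 0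
  obtain ⟨η, hη, hlocal⟩ := abs_sub_taylorWithinEval_le (convex_Icc 0 δ)
    (Set.left_mem_Icc.2 hδ.le) hφ hε
  set η₁ := min η δ
  have hη₁ : 0 < η₁ := lt_min hη hδ
  have hB : 0 ≤ B := (abs_nonneg _).trans (hφb 0 le_rfl)
  refine ⟨(2 * B + |g| * η₁ + |h| / 2 * η₁ ^ 2) / η₁ ^ 4, by positivity, fun x hx => ?_⟩
  rcases lt_or_ge x η₁ with hxη | hxη
  · have hxs : x ∈ Set.Icc 0 δ := ⟨hx, (hxη.trans_le (min_le_right _ _)).le⟩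
    have := hlocal x hxs (by rw [sub_zero, abs_of_nonneg hx]; exact hxη.trans_le (min_le_left _ _))
    rw [taylorWithinEval_two, sub_zero, abs_of_nonneg hx] at this
    exact this.trans (le_add_of_nonneg_right (by positivity))
  · calc _ ≤ |φ x| + |φ 0| + |g| * x + |h| / 2 * x ^ 2 := by
          have := abs_sub (φ x) (φ 0 + g * x + h * x ^ 2 / 2)
          have := abs_add_three (φ 0) (g * x) (h * x ^ 2 / 2)
          simp only [abs_mul, abs_div, abs_pow, abs_of_nonneg hx, abs_two] at *
          linarith
      _ ≤ 2 * B + |g| * x + |h| / 2 * x ^ 2 := by linarith [hφb x hx, hφb 0 le_rfl]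
      _ ≤ _ := quadratic_le_mul_pow_four (by positivity) (abs_nonneg _) (by positivity) hη₁ hxη
      _ ≤ _ := le_add_of_nonneg_left (by positivity)

lemma summable_mul_poissonWeight_of_abs_le {u : ℕ → ℝ} {B lam : ℝ} (hlam : 0 ≤ lam)
    (hu : ∀ k, |u k| ≤ B) : Summable fun k : ℕ => u k * poissonWeight lam k :=
  ((hasSum_poissonWeight lam).summable.mul_left B).of_norm_bounded fun k => by
    rw [Real.norm_eq_abs, abs_mul, abs_of_nonneg (poissonWeight_nonneg hlam k)]
    exact mul_le_mul_of_nonneg_right (hu k) (poissonWeight_nonneg hlam k)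

lemma abs_poisson_slice_error_le {R : ℝ → ℝ} {ε A K L m lam : ℝ} (hε : 0 ≤ ε) (hA : 0 ≤ A)
    (hm : 0 ≤ m) (hlam : 0 ≤ lam) (hlamL : lam ≤ L)
    (hR : ∀ x, 0 ≤ x → |R x| ≤ ε * x ^ 2 + A * x ^ 4)
    (h4 : Summable fun k : ℕ => (k : ℝ) ^ 4 * poissonWeight lam k)
    (hK : ∑' k : ℕ, (k : ℝ) ^ 4 * poissonWeight lam k ≤ K) :
    |∑' k : ℕ, R (k / m) * poissonWeight lam k - R (lam / m)|
      ≤ (ε * (2 * L ^ 2 + L) + A * (K + L ^ 4) / m ^ 2) / m ^ 2 := by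
  have hL2 : lam ^ 2 ≤ L ^ 2 := pow_le_pow_left₀ hlam hlamL 2
  have hL4 : lam ^ 4 ≤ L ^ 4 := pow_le_pow_left₀ hlam hlamL 4
  calc _ ≤ |∑' k : ℕ, R (k / m) * poissonWeight lam k| + |R (lam / m)| := abs_sub _ _
    _ ≤ ε * (lam ^ 2 + lam) / m ^ 2
          + A * (∑' k : ℕ, (k : ℝ) ^ 4 * poissonWeight lam k) / m ^ 4
          + (ε * (lam / m) ^ 2 + A * (lam / m) ^ 4) :=
      add_le_add (abs_tsum_mul_poissonWeight_le hm hlam hR h4) (hR _ (by positivity))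
    _ = (ε * (2 * lam ^ 2 + lam)
          + A * (∑' k : ℕ, (k : ℝ) ^ 4 * poissonWeight lam k + lam ^ 4) / m ^ 2) / m ^ 2 := by
      ring
    _ ≤ _ := by gcongr

theorem poisson_boundary_slice_expansion_general
    (L δ : ℝ) (hδ : 0 < δ)
    (φ : ℝ → ℝ) (hφb : ∀ t : ℝ, 0 ≤ t → |φ t| ≤ 1)
    (hφ : ContDiffOn ℝ 2 φ (Set.Icc 0 δ)) :
    ∀ ε > 0, ∃ M : ℕ, ∀ m : ℕ, M ≤ m → ∀ lam ∈ Set.Icc (0:ℝ) L,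
      |(∑' k : ℕ, φ ((k : ℝ) / (m : ℝ)) * (Real.exp (-lam) * lam ^ k / Nat.factorial k))
          - φ (lam / (m : ℝ))
          - (lam / (2 * (m : ℝ) ^ 2)) *
              derivWithin (fun t => derivWithin φ (Set.Icc (0:ℝ) δ) t) (Set.Icc (0:ℝ) δ) 0|
        ≤ ε * ((m : ℝ) ^ 2)⁻¹ := by
  intro ε hε
  have hLpos : 0 < 2 * L ^ 2 + L + 1 := by nlinarith [sq_nonneg (4 * L + 1)]
  set ε' := ε / (2 * (2 * L ^ 2 + L + 1))
  obtain ⟨A, hA, hR⟩ := exists_abs_taylor_two_remainder_le hδ hφ hφb (ε := ε') (by positivity)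
  obtain ⟨C, hC, hmoment⟩ := exists_tsum_pow_mul_poissonWeight_le 4
  obtain ⟨M, hM⟩ := exists_nat_ge (2 * A * (C * exp L + L ^ 4) / ε)
  refine ⟨M + 1, fun m hm lam ⟨hlam, hlamL⟩ => ?_⟩
  obtain ⟨h4, h4le⟩ := hmoment lam hlam
  change |∑' k : ℕ, φ (k / m) * poissonWeight lam k - _ - _| ≤ _
  rw [tsum_mul_poissonWeight_sub_eq (φ 0) (derivWithin φ (Set.Icc 0 δ) 0) _ _ _
    (summable_mul_poissonWeight_of_abs_le hlam fun k => hφb _ (by positivity))]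
  refine (abs_poisson_slice_error_le (K := C * exp L) (by positivity) hA m.cast_nonneg hlam hlamL
    hR h4 (h4le.trans (by gcongr))).trans ?_
  have hm1 : (M : ℝ) + 1 ≤ m ^ 2 := by
    have : (M : ℝ) + 1 ≤ m := by exact_mod_cast hm
    nlinarith
  have hquad : ε' * (2 * L ^ 2 + L) ≤ ε / 2 := by
    rw [div_mul_eq_mul_div, div_le_div_iff₀ (by positivity) two_pos]
    nlinarith
  have htail : A * (C * exp L + L ^ 4) / m ^ 2 ≤ ε / 2 := by
    rw [div_le_iff₀ (by linarith [M.cast_nonneg (α := ℝ)])]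
    rw [div_le_iff₀ hε] at hM
    nlinarith
  rw [← div_eq_mul_inv]
  gcongr
  linarith

/-- Boundary-layer slice expansion (key step in Theorem 3.1): for `φ` bounded by 1 and C²
on `[0,δ]`, `E[φ(K_λ/m)] − φ(λ/m) = (λ/(2m²))·φ''(0) + o(m⁻²)` uniformly in `λ ∈ [0,L]`,
the expectation over `K_λ ~ Poi(λ)` being written as a sum against Poisson weights. -/
theorem poisson_boundary_slice_expansion
    (L δ : ℝ) (hL : 0 < L) (hδ : 0 < δ)
    (φ : ℝ → ℝ) (hφb : ∀ t : ℝ, 0 ≤ t → |φ t| ≤ 1)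
    (hφ : ContDiffOn ℝ 2 φ (Set.Icc 0 δ)) :
    ∀ ε > 0, ∃ M : ℕ, ∀ m : ℕ, M ≤ m → ∀ lam ∈ Set.Icc (0:ℝ) L,
      |(∑' k : ℕ, φ ((k : ℝ) / (m : ℝ)) * (Real.exp (-lam) * lam ^ k / Nat.factorial k))
          - φ (lam / (m : ℝ))
          - (lam / (2 * (m : ℝ) ^ 2)) *
              derivWithin (fun t => derivWithin φ (Set.Icc (0:ℝ) δ) t) (Set.Icc (0:ℝ) δ) 0|
        ≤ ε * ((m : ℝ) ^ 2)⁻¹ :=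
  poisson_boundary_slice_expansion_general L δ hδ φ hφb hφ
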